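/- The expected-value function of a monotone submodular function under independent activation is monotone submodular: if f: 2^N → ℝ≥0 is monotone submodular and each e ∈ N is active independently with probability p_e, then F(S) := Σ_{X⊆N} γ(X,N) f(X∩S) is monotone submodular, where γ(X,N) = Π_{e∈X} p_e Π_{e∈N∖X}(1−p_e). -/

import Mathlib

/-!
Expectation is a nonnegative combination, over the possible active sets `X`, of the functions
`S ↦ f (X ∩ S)`. Intersecting with a fixed set preserves monotonicity and diminishing returns
(the added element either lies outside `X`, giving two zero marginals, or inside, giving the
marginals of `f` at `X ∩ A ⊇ X ∩ B`), and both properties are closed under nonnegative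
combinations.
-/

open Finset

/-- `γ X N = Π_{e∈X} p_e · Π_{e∈N∖X} (1−p_e)`. -/
def activeProb {α : Type*} [DecidableEq α] (p : α → ℝ) (X N : Finset α) : ℝ :=
  (∏ e ∈ X, p e) * ∏ e ∈ N \ X, (1 - p e)

lemma monotone_sum_mul {α ι : Type*} (s : Finset ι) {w : ι → ℝ} {g : ι → Finset α → ℝ}
    (hw : ∀ i ∈ s, 0 ≤ w i) (hg : ∀ i ∈ s, Monotone (g i)) :
    Monotone fun S => ∑ i ∈ s, w i * g i S :=
  fun _ _ h => sum_le_sum fun i hi => mul_le_mul_of_nonneg_left (hg i hi h) (hw i hi)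

section SetFunction

variable {α : Type*} [DecidableEq α]

def HasDiminishingReturns (g : Finset α → ℝ) : Prop :=
  ∀ A B : Finset α, B ⊆ A → ∀ e ∉ A, g (insert e A) - g A ≤ g (insert e B) - g B

lemma activeProb_nonneg {p : α → ℝ} (hp : ∀ e, 0 ≤ p e ∧ p e ≤ 1) (X N : Finset α) :
    0 ≤ activeProb p X N :=
  mul_nonneg (prod_nonneg fun e _ => (hp e).1)
    (prod_nonneg fun e _ => sub_nonneg.2 (hp e).2)

lemma Monotone.comp_inter_left {g : Finset α → ℝ} (hg : Monotone g) (X : Finset α) :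
    Monotone fun S => g (X ∩ S) :=
  hg.comp fun _ _ h => inter_subset_inter_left h

lemma HasDiminishingReturns.comp_inter_left {g : Finset α → ℝ} (hg : HasDiminishingReturns g)
    (X : Finset α) : HasDiminishingReturns fun S => g (X ∩ S) := by
  intro A B hBA e he
  by_cases heX : e ∈ X
  · simp only [inter_insert_of_mem heX]
    exact hg _ _ (inter_subset_inter_left hBA) e fun h => he (mem_of_mem_inter_right h)
  · simp only [inter_insert_of_notMem heX, sub_self, le_refl]

lemma hasDiminishingReturns_sum_mul {ι : Type*} (s : Finset ι) {w : ι → ℝ}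
    {g : ι → Finset α → ℝ} (hw : ∀ i ∈ s, 0 ≤ w i) (hg : ∀ i ∈ s, HasDiminishingReturns (g i)) :
    HasDiminishingReturns fun S => ∑ i ∈ s, w i * g i S := by
  intro A B hBA e he
  simp only [← sum_sub_distrib, ← mul_sub]
  exact sum_le_sum fun i hi => mul_le_mul_of_nonneg_left (hg i hi A B hBA e he) (hw i hi)

end SetFunction

theorem stmt_14_general {α : Type*} [Fintype α] [DecidableEq α]
    (p : α → ℝ) (hp : ∀ e, 0 ≤ p e ∧ p e ≤ 1)
    (f : Finset α → ℝ)
    (hfmono : ∀ S₁ S₂ : Finset α, S₁ ⊆ S₂ → f S₁ ≤ f S₂)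
    (hfsub : ∀ A B : Finset α, B ⊆ A → ∀ e ∉ A,
      f (insert e A) - f A ≤ f (insert e B) - f B)
    (F : Finset α → ℝ)
    (hF : ∀ S : Finset α, F S = ∑ X ∈ (Finset.univ : Finset α).powerset,
      activeProb p X Finset.univ * f (X ∩ S)) :
    (∀ S₁ S₂ : Finset α, S₁ ⊆ S₂ → F S₁ ≤ F S₂) ∧
    (∀ A B : Finset α, B ⊆ A → ∀ e ∉ A,
      F (insert e A) - F A ≤ F (insert e B) - F B) := by
  obtain rfl : F = fun S => ∑ X ∈ (univ : Finset α).powerset, activeProb p X univ * f (X ∩ S) :=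
    funext hF
  have hw : ∀ X ∈ (univ : Finset α).powerset, 0 ≤ activeProb p X univ :=
    fun X _ => activeProb_nonneg hp X univ
  have hf : Monotone f := hfmono
  exact ⟨fun _ _ h => monotone_sum_mul _ hw (fun X _ => hf.comp_inter_left X) h,
    hasDiminishingReturns_sum_mul _ hw fun X _ => HasDiminishingReturns.comp_inter_left hfsub X⟩

/-- the expected-value function of a monotone submodular function under
independent activation, `F(S) = Σ_{X⊆N} γ(X,N) f(X∩S)`, is monotone submodular. -/
theorem stmt_14 {α : Type*} [Fintype α] [DecidableEq α]
    (p : α → ℝ) (hp : ∀ e, 0 ≤ p e ∧ p e ≤ 1)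
    (f : Finset α → ℝ)
    (hfnonneg : ∀ S, 0 ≤ f S)
    (hfmono : ∀ S₁ S₂ : Finset α, S₁ ⊆ S₂ → f S₁ ≤ f S₂)
    (hfsub : ∀ A B : Finset α, B ⊆ A → ∀ e ∉ A,
      f (insert e A) - f A ≤ f (insert e B) - f B)
    (F : Finset α → ℝ)
    (hF : ∀ S : Finset α, F S = ∑ X ∈ (Finset.univ : Finset α).powerset,
      activeProb p X Finset.univ * f (X ∩ S)) :
    (∀ S₁ S₂ : Finset α, S₁ ⊆ S₂ → F S₁ ≤ F S₂) ∧
    (∀ A B : Finset α, B ⊆ A → ∀ e ∉ A,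
      F (insert e A) - F A ≤ F (insert e B) - F B) :=
  stmt_14_general p hp f hfmono hfsub F hF
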